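/- arXiv:2305.16294 — 2 statements merged into one kernel-verified Lean document; each statement's English description precedes it below -/
import Mathlib

section
/- Fix constants κ ∈ (0,1) and μ ∈ [0,1], and suppose κ·d ≥ 1. Then for any two distinct vertices a, b ∈ [N]: ℙ(a ∈ W and b ∈ W) ≤ N^{−2+2μ}. -/
open MeasureTheory ProbabilityTheory Filter Real

noncomputable section

namespace ERpaper

attribute [local instance] Classical.propDecidable

/-- The simple graph determined by a Boolean adjacency function. -/
def graph {N : ℕ} (a : Fin N → Fin N → Bool) : SimpleGraph (Fin N) where
  Adj x y := x ≠ y ∧ (a x y = true ∨ a y x = true)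
  symm := ⟨fun x y h => ⟨h.1.symm, h.2.symm⟩⟩
  loopless := ⟨fun x h => h.1 rfl⟩

/-- Closed ball of radius `r` around `x` in the graph metric. -/
def gball {N : ℕ} (G : SimpleGraph (Fin N)) (x : Fin N) (r : ℕ) : Set (Fin N) :=
  {y | G.Reachable x y ∧ G.dist x y ≤ r}

/-- Sphere of radius `r` around `x` in the graph metric. -/
def gsphere {N : ℕ} (G : SimpleGraph (Fin N)) (x : Fin N) (r : ℕ) : Set (Fin N) :=
  {y | G.Reachable x y ∧ G.dist x y = r}

/-- Normalized degree `α_x = |S₁(x)|/d`. -/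
def ndeg {N : ℕ} (G : SimpleGraph (Fin N)) (d : ℝ) (x : Fin N) : ℝ :=
  ((gsphere G x 1).ncard : ℝ) / d

/-- Rescaled adjacency matrix `H = A/√d`. -/
def Hmat {N : ℕ} (d : ℝ) (a : Fin N → Fin N → Bool) : Matrix (Fin N) (Fin N) ℝ :=
  Matrix.of fun x y => (if (graph a).Adj x y then (1 : ℝ) else 0) / Real.sqrt d

/-- `M^{(X)}`: the rows and columns indexed by `X` are set to zero. -/
def minor {N : ℕ} (M : Matrix (Fin N) (Fin N) ℝ) (X : Set (Fin N)) :
    Matrix (Fin N) (Fin N) ℝ :=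
  Matrix.of fun x y => if x ∈ X ∨ y ∈ X then 0 else M x y

/-- `M|_X`: the entries outside `X × X` are set to zero. -/
def restr {N : ℕ} (M : Matrix (Fin N) (Fin N) ℝ) (X : Set (Fin N)) :
    Matrix (Fin N) (Fin N) ℝ :=
  Matrix.of fun x y => if x ∈ X ∧ y ∈ X then M x y else 0

/-- The multiset of eigenvalues of a symmetric real matrix. -/
def eigs {N : ℕ} (M : Matrix (Fin N) (Fin N) ℝ) : Multiset ℝ :=
  if h : M.IsHermitian then Finset.univ.val.map h.eigenvalues else 0

/-- `lamK M k` is the `k`-th largest eigenvalue of `M` (`1`-indexed). -/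
def lamK {N : ℕ} (M : Matrix (Fin N) (Fin N) ℝ) (k : ℕ) : ℝ :=
  (((eigs M).sort (· ≤ ·)).reverse).getD (k - 1) 0

def IsEigenpair {N : ℕ} (M : Matrix (Fin N) (Fin N) ℝ) (l : ℝ) (v : Fin N → ℝ) : Prop :=
  v ≠ 0 ∧ M.mulVec v = l • v

def IsEigenvalue {N : ℕ} (M : Matrix (Fin N) (Fin N) ℝ) (l : ℝ) : Prop :=
  ∃ v, IsEigenpair M l v

/-- Euclidean norm on `ℝ^N`. -/
def norm2 {N : ℕ} (v : Fin N → ℝ) : ℝ := Real.sqrt (∑ y, v y ^ 2)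

/-- `Λ(α) = α/√(α-1)`. -/
def Lambda (α : ℝ) : ℝ := α / Real.sqrt (α - 1)

/-- The Erdős–Rényi property: symmetric Boolean adjacency entries that are independent
Bernoulli(p) random variables. -/
structure IsER {Ω : Type*} [MeasurableSpace Ω] (P : Measure Ω) (N : ℕ) (p : ℝ)
    (a : Ω → Fin N → Fin N → Bool) : Prop where
  symm : ∀ ω x y, a ω x y = a ω y x
  loopless : ∀ ω x, a ω x x = false
  meas : ∀ x y, Measurable fun ω => a ω x y
  prob : ∀ x y : Fin N, x ≠ y → P {ω | a ω x y = true} = ENNReal.ofReal p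
  indep : iIndepSet
    (fun e : {q : Fin N × Fin N // q.1 < q.2} => {ω | a ω e.1.1 e.1.2 = true}) P

/-- `α*(μ)`. -/
def alphaStar {Ω : Type*} [MeasurableSpace Ω] (P : Measure Ω) {N : ℕ}
    (a : Ω → Fin N → Fin N → Bool) (d κ μ : ℝ) : ℝ :=
  if h : 0 < N then
    max (sInf {α : ℝ | 0 < α ∧
      (P {ω | α ≤ ndeg (graph (a ω)) d ⟨0, h⟩}).toReal ≤ (N : ℝ) ^ (μ - 1)}) (2 + κ)
  else 2 + κ

/-- `V = {x : α_x ≥ α*(μ)}`. -/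
def Vset {Ω : Type*} [MeasurableSpace Ω] (P : Measure Ω) {N : ℕ}
    (a : Ω → Fin N → Fin N → Bool) (d κ μ : ℝ) (ω : Ω) : Set (Fin N) :=
  {x | alphaStar P a d κ μ ≤ ndeg (graph (a ω)) d x}

/-- `W = {x ∈ V : Λ(α_x) ≥ Λ(α*(μ)) + κ/2}`. -/
def Wset {Ω : Type*} [MeasurableSpace Ω] (P : Measure Ω) {N : ℕ}
    (a : Ω → Fin N → Fin N → Bool) (d κ μ : ℝ) (ω : Ω) : Set (Fin N) :=
  {x | x ∈ Vset P a d κ μ ω ∧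
    Lambda (alphaStar P a d κ μ) + κ / 2 ≤ Lambda (ndeg (graph (a ω)) d x)}

/-- `λ(x) = λ₂(H^{(V∖{x})})`. -/
def lamx {Ω : Type*} [MeasurableSpace Ω] (P : Measure Ω) {N : ℕ}
    (a : Ω → Fin N → Fin N → Bool) (d κ μ : ℝ) (ω : Ω) (x : Fin N) : ℝ :=
  lamK (minor (Hmat d (a ω)) (Vset P a d κ μ ω \ {x})) 2

def bstar : ℝ := 1 / (2 * Real.log 2 - 1)

/-- Unnormalized profile coefficients. -/
def uAux (α : ℝ) : ℕ → ℝ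
  | 0 => 1
  | i + 1 => Real.sqrt (α / (α - 1)) * ((Real.sqrt (α - 1))⁻¹) ^ i

/-- Normalized profile coefficients `u_i(α)` for radius `r`. -/
def uCoef (α : ℝ) (r i : ℕ) : ℝ :=
  uAux α i / Real.sqrt (∑ j ∈ Finset.range r, uAux α j ^ 2)

/-- The localization profile vector `v_r(x)`. -/
def vProfile {N : ℕ} (G : SimpleGraph (Fin N)) (d : ℝ) (x : Fin N) (r : ℕ) :
    Fin N → ℝ :=
  fun y => ∑ i ∈ Finset.range r,
    uCoef (ndeg G d x) r i * Set.indicator (gsphere G x i) (fun _ => (1 : ℝ)) y /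
      Real.sqrt ((gsphere G x i).ncard)

/-- `w` is an ℓ²-normalized top eigenvector of `M` with nonnegative value at `x`. -/
def IsTopEigenvectorProfile {N : ℕ} (M : Matrix (Fin N) (Fin N) ℝ) (x : Fin N)
    (w : Fin N → ℝ) : Prop :=
  IsEigenpair M (lamK M 1) w ∧ norm2 w = 1 ∧ 0 ≤ w x

/-- The localization length `ℓ(w)`. -/
def locLength {N : ℕ} (G : SimpleGraph (Fin N)) (w : Fin N → ℝ) : ℝ :=
  ⨅ x : Fin N, ∑ y, (G.dist x y : ℝ) * w y ^ 2

/-- The diameter of a graph (maximal diameter of its connected components). -/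
def gdiam {N : ℕ} (G : SimpleGraph (Fin N)) : ℕ :=
  (Finset.univ ×ˢ Finset.univ).sup fun p : Fin N × Fin N => G.dist p.1 p.2


/-! A vertex of `W` has normalized degree at least `α* + 2κ`, because `Λ` has slope at most
`1/4` on `[2, ∞)`. As `κd ≥ 1`, even without the potential edge `ab` each of `a`, `b` then has at
least `d(α* + κ)` neighbours. These two events are determined by disjoint sets of potential edges,
hence independent, and each is at most as likely as `α₁ ≥ α* + κ`, which has probability at most
`N^{μ-1}` because `α* + κ` exceeds the infimum defining `α*`. -/

open Finset MeasurableSpace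

/-- `ℙ(Bin(n, p) ≥ k)`, computed by conditioning on the last trial. -/
def binomTail (p : ℝ) : ℕ → ℕ → ℝ
  | 0, k => if k = 0 then 1 else 0
  | n + 1, k => p * binomTail p n (k - 1) + (1 - p) * binomTail p n k

lemma binomTail_antitone {p : ℝ} (hp₀ : 0 ≤ p) (hp₁ : p ≤ 1) (n : ℕ) :
    Antitone (binomTail p n) := by
  induction n with
  | zero =>
    intro k l hkl
    simp only [binomTail]
    split_ifs <;> first | omega | norm_num
  | succ n ih =>
    intro k l hkl
    have h₁ := ih (Nat.sub_le_sub_right hkl 1)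
    have h₂ := ih hkl
    simp only [binomTail]
    nlinarith

lemma binomTail_mono {p : ℝ} (hp₀ : 0 ≤ p) (hp₁ : p ≤ 1) (k : ℕ) :
    Monotone (binomTail p · k) := by
  refine monotone_nat_of_le_succ fun n => ?_
  have := binomTail_antitone hp₀ hp₁ n (Nat.sub_le k 1)
  simp only [binomTail]
  nlinarith

section OccurrenceCount

variable {ι Ω : Type*} {E : ι → Set Ω}

def occCount (E : ι → Set Ω) (F : Finset ι) (ω : Ω) : ℕ := #{i ∈ F | ω ∈ E i}

lemma setOf_occCount_ge_insert {i : ι} {F : Finset ι} (hi : i ∉ F) (k : ℕ) :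
    {ω | k ≤ occCount E (insert i F) ω} =
      (E i ∩ {ω | k - 1 ≤ occCount E F ω}) ∪ ((E i)ᶜ ∩ {ω | k ≤ occCount E F ω}) := by
  ext ω
  by_cases h : ω ∈ E i <;>
    simp [occCount, filter_insert, h, card_insert_of_notMem, hi]

lemma measurableSet_occCount_ge (E : ι → Set Ω) (F : Finset ι) (k : ℕ) :
    MeasurableSet[generateFrom {t | ∃ i ∈ (F : Set ι), E i = t}]
      {ω | k ≤ occCount E F ω} := by
  induction F using Finset.induction_on generalizing k with
  | empty =>
    simp only [occCount, filter_empty, card_empty]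
    exact MeasurableSet.const _
  | @insert i F hi ih =>
    have hmono : generateFrom {t | ∃ j ∈ (F : Set ι), E j = t} ≤
        generateFrom {t | ∃ j ∈ (insert i F : Set ι), E j = t} :=
      generateFrom_mono fun t ⟨j, hj, hjt⟩ => ⟨j, Set.mem_insert_of_mem i hj, hjt⟩
    have hEi : MeasurableSet[generateFrom {t | ∃ j ∈ (insert i F : Set ι), E j = t}] (E i) :=
      measurableSet_generateFrom ⟨i, Set.mem_insert i _, rfl⟩
    rw [setOf_occCount_ge_insert hi, coe_insert]
    exact (hEi.inter (hmono _ (ih (k - 1)))).union (hEi.compl.inter (hmono _ (ih k)))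

variable [MeasurableSpace Ω] {P : Measure Ω}

lemma _root_.ProbabilityTheory.iIndepSet.measure_inter_of_disjoint
    (hm : ∀ i, MeasurableSet (E i)) (hind : iIndepSet E P) {S T : Set ι} (hST : Disjoint S T)
    {A B : Set Ω} (hA : MeasurableSet[generateFrom {t | ∃ i ∈ S, E i = t}] A)
    (hB : MeasurableSet[generateFrom {t | ∃ i ∈ T, E i = t}] B) :
    P (A ∩ B) = P A * P B :=
  (Indep_iff _ _ _).mp (hind.indep_generateFrom_of_disjoint hm S T hST) A B hA hB

lemma measure_occCount_ge_inter (hm : ∀ i, MeasurableSet (E i)) (hind : iIndepSet E P)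
    {F₁ F₂ : Finset ι} (hF : Disjoint F₁ F₂) (k l : ℕ) :
    P ({ω | k ≤ occCount E F₁ ω} ∩ {ω | l ≤ occCount E F₂ ω}) =
      P {ω | k ≤ occCount E F₁ ω} * P {ω | l ≤ occCount E F₂ ω} :=
  hind.measure_inter_of_disjoint hm (disjoint_coe.mpr hF)
    (measurableSet_occCount_ge E F₁ k) (measurableSet_occCount_ge E F₂ l)

lemma toReal_measure_occCount_ge [IsProbabilityMeasure P] {p : ℝ} (hp₀ : 0 ≤ p) (hp₁ : p ≤ 1)
    (hm : ∀ i, MeasurableSet (E i)) (hind : iIndepSet E P)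
    (hprob : ∀ i, P (E i) = ENNReal.ofReal p) (F : Finset ι) (k : ℕ) :
    (P {ω | k ≤ occCount E F ω}).toReal = binomTail p #F k := by
  induction F using Finset.induction_on generalizing k with
  | empty =>
    by_cases hk : k = 0 <;> simp [occCount, binomTail, hk]
  | @insert i F hi ih =>
    have hiF : Disjoint ({i} : Set ι) F := Set.disjoint_singleton_left.mpr hi
    have hEi : MeasurableSet[generateFrom {t | ∃ j ∈ ({i} : Set ι), E j = t}] (E i) :=
      measurableSet_generateFrom ⟨i, rfl, rfl⟩
    have hcompl : P (E i)ᶜ = ENNReal.ofReal (1 - p) := by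
      rw [prob_compl_eq_one_sub (hm i), hprob i, ENNReal.ofReal_sub _ hp₀, ENNReal.ofReal_one]
    have hdisj : Disjoint (E i ∩ {ω | k - 1 ≤ occCount E F ω})
        ((E i)ᶜ ∩ {ω | k ≤ occCount E F ω}) :=
      (disjoint_compl_right.mono Set.inter_subset_left Set.inter_subset_left)
    rw [setOf_occCount_ge_insert hi, measure_union hdisj
        ((hm i).compl.inter (generateFrom_le (by rintro t ⟨j, -, rfl⟩; exact hm j) _
          (measurableSet_occCount_ge E F k))),
      hind.measure_inter_of_disjoint hm hiF hEi (measurableSet_occCount_ge E F (k - 1)),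
      hind.measure_inter_of_disjoint hm hiF hEi.compl (measurableSet_occCount_ge E F k),
      hprob i, hcompl, ENNReal.toReal_add (by finiteness) (by finiteness), ENNReal.toReal_mul,
      ENNReal.toReal_mul, ENNReal.toReal_ofReal hp₀, ENNReal.toReal_ofReal (by linarith),
      ih, ih, card_insert_of_notMem hi, binomTail]

end OccurrenceCount

lemma Lambda_eq {α : ℝ} (hα : 1 < α) : Lambda α = √(α - 1) + (√(α - 1))⁻¹ := by
  have hu : 0 < √(α - 1) := Real.sqrt_pos.mpr (by linarith)
  rw [Lambda, eq_comm, ← sub_eq_zero]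
  field_simp
  rw [Real.sq_sqrt (by linarith)]
  ring

lemma Lambda_sub_le {s t : ℝ} (hs : 2 ≤ s) (hst : s ≤ t) :
    Lambda t - Lambda s ≤ (t - s) / 4 := by
  obtain ⟨u, hu, rfl⟩ : ∃ u, 1 ≤ u ∧ s = u ^ 2 + 1 :=
    ⟨√(s - 1), Real.one_le_sqrt.mpr (by linarith), by rw [Real.sq_sqrt (by linarith)]; ring⟩
  obtain ⟨v, hv, rfl⟩ : ∃ v, 1 ≤ v ∧ t = v ^ 2 + 1 :=
    ⟨√(t - 1), Real.one_le_sqrt.mpr (by linarith), by rw [Real.sq_sqrt (by linarith)]; ring⟩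
  have huv : u ≤ v := by nlinarith
  rw [Lambda_eq (by nlinarith), Lambda_eq (by nlinarith), add_sub_cancel_right,
    add_sub_cancel_right, Real.sqrt_sq (by linarith), Real.sqrt_sq (by linarith)]
  have key : 4 * (u * v) - 4 ≤ u * v * (u + v) := by
    nlinarith [mul_nonneg (sub_nonneg.mpr hu) (sub_nonneg.mpr hv), sq_nonneg (u + v - 8 / 3),
      sq_nonneg (u - v), sq_nonneg (u * v - 2)]
  have e : v + v⁻¹ - (u + u⁻¹) = (v - u) * (u * v - 1) / (u * v) := by
    field_simp
    ring
  rw [e, div_le_div_iff₀ (by positivity) (by norm_num)]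
  nlinarith [mul_nonneg (sub_nonneg.mpr huv) (sub_nonneg.mpr key)]

section Edges

variable {N : ℕ}

abbrev Edge (N : ℕ) := {q : Fin N × Fin N // q.1 < q.2}

def edgeEvent {Ω : Type*} (a : Ω → Fin N → Fin N → Bool) (e : Edge N) : Set Ω :=
  {ω | a ω e.1.1 e.1.2 = true}

def edgesAt (x : Fin N) (S : Finset (Fin N)) : Finset (Edge N) :=
  {e | (e.1.1 = x ∧ e.1.2 ∈ S) ∨ (e.1.2 = x ∧ e.1.1 ∈ S)}

lemma card_edgesAt {x : Fin N} {S : Finset (Fin N)} (hx : x ∉ S) : #(edgesAt x S) = #S := by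
  refine card_bij' (fun e _ => if e.1.1 = x then e.1.2 else e.1.1)
    (fun z hz => if h : x < z then ⟨(x, z), h⟩ else
      ⟨(z, x), lt_of_le_of_ne (not_lt.mp h) fun hzx : z = x => hx (hzx ▸ hz)⟩) ?_ ?_ ?_ ?_
  · intro e he
    simp only [edgesAt, mem_filter, mem_univ, true_and] at he
    have := e.2
    split_ifs <;> grind
  · intro z hz
    simp only [edgesAt, mem_filter, mem_univ, true_and]
    split_ifs <;> simp_all
  · intro e he
    simp only [edgesAt, mem_filter, mem_univ, true_and] at he
    have := e.2
    apply Subtype.ext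
    split_ifs <;> grind
  · intro z hz
    split_ifs <;> grind

lemma disjoint_edgesAt {x y : Fin N} {S T : Finset (Fin N)} (hxy : x ≠ y) (hy : y ∉ S) :
    Disjoint (edgesAt x S) (edgesAt y T) := by
  simp only [edgesAt, disjoint_filter]
  grind

lemma occCount_edgesAt {Ω : Type*} (a : Ω → Fin N → Fin N → Bool) {ω : Ω}
    (hsym : ∀ u v, a ω u v = a ω v u) {x : Fin N} {S : Finset (Fin N)} (hx : x ∉ S) :
    occCount (edgeEvent a) (edgesAt x S) ω = #{z ∈ S | a ω x z = true} := by
  have hfilter : {e ∈ edgesAt x S | ω ∈ edgeEvent a e} = edgesAt x {z ∈ S | a ω x z = true} := by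
    ext e
    simp only [edgesAt, edgeEvent, mem_filter, mem_univ, true_and, Set.mem_ofPred_eq]
    grind
  rw [occCount, hfilter, card_edgesAt (fun h => hx (mem_filter.mp h).1)]

lemma ndeg_graph_eq {a : Fin N → Fin N → Bool} (hsym : ∀ u v, a u v = a v u) (d : ℝ)
    (x : Fin N) : ndeg (graph a) d x = #{z ∈ univ.erase x | a x z = true} / d := by
  have hS : gsphere (graph a) x 1 = ↑({z ∈ univ.erase x | a x z = true} : Finset (Fin N)) := by
    ext z
    simp only [gsphere, SimpleGraph.dist_eq_one_iff_adj, coe_filter, mem_erase, mem_univ,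
      and_true, Set.mem_ofPred_eq]
    constructor
    · rintro ⟨-, hne, h | h⟩
      exacts [⟨hne.symm, h⟩, ⟨hne.symm, hsym x z ▸ h⟩]
    · rintro ⟨hne, h⟩
      have hadj : (graph a).Adj x z := ⟨hne.symm, Or.inl h⟩
      exact ⟨hadj.reachable, hadj⟩
  rw [ndeg, hS, Set.ncard_coe_finset]

lemma ndeg_le {G : SimpleGraph (Fin N)} {d : ℝ} (hd : 0 < d) (x : Fin N) :
    ndeg G d x ≤ N / d := by
  unfold ndeg
  gcongr
  simpa using Set.ncard_le_card (gsphere G x 1)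

end Edges

section ErdosRenyi

variable {Ω : Type*} {N : ℕ} {a : Ω → Fin N → Fin N → Bool} {d κ μ : ℝ}

lemma setOf_ndeg_ge_eq (hsym : ∀ ω u v, a ω u v = a ω v u) (hd : 0 < d) (β : ℝ) (x : Fin N) :
    {ω | β ≤ ndeg (graph (a ω)) d x} =
      {ω | ⌈d * β⌉₊ ≤ occCount (edgeEvent a) (edgesAt x (univ.erase x)) ω} := by
  ext ω
  rw [Set.mem_ofPred_eq, Set.mem_ofPred_eq, ndeg_graph_eq (hsym ω), le_div_iff₀ hd, mul_comm,
    occCount_edgesAt a (hsym ω) (by simp), Nat.ceil_le]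

variable [MeasurableSpace Ω] {P : Measure Ω}

lemma IsER.measurableSet_edgeEvent {p : ℝ} (hER : IsER P N p a) (e : Edge N) :
    MeasurableSet (edgeEvent a e) :=
  hER.meas _ _ (measurableSet_singleton true)

lemma two_add_le_alphaStar : 2 + κ ≤ alphaStar P a d κ μ := by
  unfold alphaStar
  split_ifs
  exacts [le_max_right _ _, le_rfl]

lemma toReal_measure_ndeg_ge_le_of_alphaStar_lt [IsFiniteMeasure P] (hd : 0 < d)
    (hN : 0 < N) {β : ℝ} (hβ : alphaStar P a d κ μ < β) :
    (P {ω | β ≤ ndeg (graph (a ω)) d ⟨0, hN⟩}).toReal ≤ (N : ℝ) ^ (μ - 1) := by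
  rw [alphaStar, dif_pos hN] at hβ
  have hne : {α : ℝ | 0 < α ∧
      (P {ω | α ≤ ndeg (graph (a ω)) d ⟨0, hN⟩}).toReal ≤ (N : ℝ) ^ (μ - 1)}.Nonempty := by
    refine ⟨N / d + 1, by positivity, ?_⟩
    have hempty : {ω | (N : ℝ) / d + 1 ≤ ndeg (graph (a ω)) d ⟨0, hN⟩} = ∅ :=
      Set.eq_empty_of_forall_notMem fun ω hω => by
        linarith [ndeg_le (G := graph (a ω)) hd ⟨0, hN⟩, hω.out]
    rw [hempty, measure_empty, ENNReal.toReal_zero]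
    positivity
  obtain ⟨s, ⟨-, hs⟩, hsβ⟩ := exists_lt_of_csInf_lt hne ((le_max_left _ _).trans_lt hβ)
  exact (ENNReal.toReal_mono (measure_ne_top _ _)
    (measure_mono fun ω hω => hsβ.le.trans hω)).trans hs

lemma add_two_mul_le_ndeg_of_mem_Wset (hκ : 0 ≤ κ) {ω : Ω} {x : Fin N}
    (hx : x ∈ Wset P a d κ μ ω) : alphaStar P a d κ μ + 2 * κ ≤ ndeg (graph (a ω)) d x := by
  have hα : 2 + κ ≤ alphaStar P a d κ μ := two_add_le_alphaStar
  linarith [Lambda_sub_le (by linarith) hx.1, hx.2]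

lemma ceil_le_occCount_of_mem_Wset (hsym : ∀ ω u v, a ω u v = a ω v u) (hd : 0 < d)
    (hκ : 0 ≤ κ) (hκd : 1 ≤ κ * d) {ω : Ω} {x : Fin N} (hx : x ∈ Wset P a d κ μ ω) (y : Fin N) :
    ⌈d * (alphaStar P a d κ μ + κ)⌉₊ ≤
      occCount (edgeEvent a) (edgesAt x ((univ.erase x).erase y)) ω := by
  have hdeg := add_two_mul_le_ndeg_of_mem_Wset hκ hx
  rw [ndeg_graph_eq (hsym ω), le_div_iff₀ hd] at hdeg
  have hy : #{z ∈ univ.erase x | a ω x z = true} ≤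
      #{z ∈ (univ.erase x).erase y | a ω x z = true} + 1 := by
    refine (card_le_card fun z hz => ?_).trans (card_insert_le y _)
    simp only [mem_insert, mem_filter, mem_erase] at hz ⊢
    tauto
  rw [occCount_edgesAt a (hsym ω) (by simp), Nat.ceil_le]
  have hy' : (#{z ∈ univ.erase x | a ω x z = true} : ℝ) ≤
      #{z ∈ (univ.erase x).erase y | a ω x z = true} + 1 := by exact_mod_cast hy
  nlinarith

lemma IsER.toReal_measure_occCount_edgesAt_ge_le [IsProbabilityMeasure P] {p : ℝ}
    (hER : IsER P N p a) (hp₀ : 0 ≤ p) (hp₁ : p ≤ 1) {x y : Fin N} {S T : Finset (Fin N)}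
    (hx : x ∉ S) (hy : y ∉ T) (hST : #S ≤ #T) (k : ℕ) :
    (P {ω | k ≤ occCount (edgeEvent a) (edgesAt x S) ω}).toReal ≤
      (P {ω | k ≤ occCount (edgeEvent a) (edgesAt y T) ω}).toReal := by
  have hprob : ∀ e : Edge N, P (edgeEvent a e) = ENNReal.ofReal p := fun e => hER.prob _ _ e.2.ne
  rw [toReal_measure_occCount_ge hp₀ hp₁ hER.measurableSet_edgeEvent hER.indep hprob,
    toReal_measure_occCount_ge hp₀ hp₁ hER.measurableSet_edgeEvent hER.indep hprob,
    card_edgesAt hx, card_edgesAt hy]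
  exact binomTail_mono hp₀ hp₁ k hST

lemma IsER.toReal_measure_occCount_edgesAt_ge_le_rpow [IsProbabilityMeasure P]
    (hER : IsER P N (d / N) a) (hd : 0 < d) (hdN : d ≤ N) (hκ : 0 < κ) {x : Fin N}
    {S : Finset (Fin N)} (hx : x ∉ S) :
    (P {ω | ⌈d * (alphaStar P a d κ μ + κ)⌉₊ ≤ occCount (edgeEvent a) (edgesAt x S) ω}).toReal ≤
      (N : ℝ) ^ (μ - 1) := by
  have hN : 0 < N := x.pos
  set v₀ : Fin N := ⟨0, hN⟩
  calc _ ≤ (P {ω | ⌈d * (alphaStar P a d κ μ + κ)⌉₊ ≤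
          occCount (edgeEvent a) (edgesAt v₀ (univ.erase v₀)) ω}).toReal :=
        hER.toReal_measure_occCount_edgesAt_ge_le (by positivity)
          (div_le_one_of_le₀ hdN (Nat.cast_nonneg N)) hx (by simp)
          ((card_le_card (subset_erase.mpr ⟨subset_univ S, hx⟩)).trans_eq (by simp)) _
    _ = (P {ω | alphaStar P a d κ μ + κ ≤ ndeg (graph (a ω)) d v₀}).toReal := by
        rw [setOf_ndeg_ge_eq hER.symm hd]
    _ ≤ (N : ℝ) ^ (μ - 1) :=
        toReal_measure_ndeg_ge_le_of_alphaStar_lt hd hN (lt_add_of_pos_right _ hκ)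

end ErdosRenyi

theorem statement17_general
    {Ω : Type*} [MeasurableSpace Ω] (P : Measure Ω) [IsProbabilityMeasure P]
    (N : ℕ) (d : ℝ) (hd : 0 < d) (hdN : d ≤ N)
    (a : Ω → Fin N → Fin N → Bool) (hER : IsER P N (d / N) a)
    (κ μ : ℝ) (hκ : κ ∈ Set.Ioo (0:ℝ) 1) (hκd : 1 ≤ κ * d)
    (x y : Fin N) (hxy : x ≠ y) :
    (P {ω | x ∈ Wset P a d κ μ ω ∧ y ∈ Wset P a d κ μ ω}).toReal ≤
      (N : ℝ) ^ (-2 + 2 * μ) := by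
  set k := ⌈d * (alphaStar P a d κ μ + κ)⌉₊
  let A (v w : Fin N) := {ω | k ≤ occCount (edgeEvent a) (edgesAt v ((univ.erase v).erase w)) ω}
  have hA : ∀ v w, (P (A v w)).toReal ≤ (N : ℝ) ^ (μ - 1) := fun v w =>
    hER.toReal_measure_occCount_edgesAt_ge_le_rpow hd hdN hκ.1 (by simp)
  calc (P {ω | x ∈ Wset P a d κ μ ω ∧ y ∈ Wset P a d κ μ ω}).toReal
      ≤ (P (A x y ∩ A y x)).toReal :=
        ENNReal.toReal_mono (measure_ne_top _ _) (measure_mono fun ω ⟨hx, hy⟩ =>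
          ⟨ceil_le_occCount_of_mem_Wset hER.symm hd hκ.1.le hκd hx y,
            ceil_le_occCount_of_mem_Wset hER.symm hd hκ.1.le hκd hy x⟩)
    _ = (P (A x y)).toReal * (P (A y x)).toReal := by
        rw [measure_occCount_ge_inter hER.measurableSet_edgeEvent hER.indep
          (disjoint_edgesAt hxy (by simp)), ENNReal.toReal_mul]
    _ ≤ (N : ℝ) ^ (μ - 1) * (N : ℝ) ^ (μ - 1) :=
        mul_le_mul (hA x y) (hA y x) ENNReal.toReal_nonneg (by positivity)
    _ = (N : ℝ) ^ (-2 + 2 * μ) := by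
        rw [← Real.rpow_add (by exact_mod_cast x.pos)]
        ring_nf

theorem statement17
    {Ω : Type*} [MeasurableSpace Ω] (P : Measure Ω) [IsProbabilityMeasure P]
    (N : ℕ) (d : ℝ) (hd : 0 < d) (hdN : d ≤ N)
    (a : Ω → Fin N → Fin N → Bool) (hER : IsER P N (d / N) a)
    (κ μ : ℝ) (hκ : κ ∈ Set.Ioo (0:ℝ) 1) (hμ : μ ∈ Set.Icc (0:ℝ) 1) (hκd : 1 ≤ κ * d)
    (x y : Fin N) (hxy : x ≠ y) :
    (P {ω | x ∈ Wset P a d κ μ ω ∧ y ∈ Wset P a d κ μ ω}).toReal ≤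
      (N : ℝ) ^ (-2 + 2 * μ) :=
  statement17_general P N d hd hdN a hER κ μ hκ hκd x y hxy

end ERpaper
end
end

section
/- Let M be the bounded linear operator on ℓ²(ℕ*) (square-summable real sequences indexed by the positive integers) determined by the adjacency structure of ℕ*, i.e. (M a)_j = a_{j−1} + a_{j+1} with the convention a₀ := 0. Then for every real t > 2, the operator I − t^{−1}·M is invertible, its inverse is given by the norm-convergent Neumann series Σ_{k≥0} t^{−k}·M^k, and for every j ∈ ℕ* one has ⟨e₁, (I − t^{−1}·M)^{−1} e_j⟩ = t·(2/(t + √(t²−4)))^j, where (e_j)_{j∈ℕ*} is the standard orthonormal basis of ℓ²(ℕ*). -/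
open MeasureTheory ProbabilityTheory Filter Real

noncomputable section

namespace ERpaper

attribute [local instance] Classical.propDecidable

/-!
Since `‖M‖ ≤ 2`, the operator `t⁻¹ • M` has norm `< 1` for `t > 2`, so the Neumann series `B`
inverts `1 - t⁻¹ • M`. The root `s = 2 / (t + √(t² - 4)) ∈ (0, 1)` of `s² - t s + 1 = 0` makes
`x = (t sⁿ)ₙ` an ℓ² solution of `(1 - t⁻¹ • M) x = e₁`: the recurrence `t xₙ = xₙ₋₁ + xₙ₊₁`
holds for `n ≥ 2`, and `t x₁ = x₂ + t` at the boundary. As `M` is symmetric,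
`⟪e₁, B e_j⟫ = ⟪(1 - t⁻¹ • M) x, B e_j⟫ = ⟪x, e_j⟫ = t sʲ`.
-/

section LpTwo

variable {ι : Type*}

lemma lp.sum_sq_le_norm_sq (v : lp (fun _ : ι => ℝ) 2) (s : Finset ι) :
    ∑ i ∈ s, v i ^ 2 ≤ ‖v‖ ^ 2 := by
  simpa [Real.rpow_two] using lp.sum_rpow_le_norm_rpow (by norm_num) v s

lemma lp.norm_le_of_forall_sum_sq_le {v : lp (fun _ : ι => ℝ) 2} {C : ℝ} (hC : 0 ≤ C)
    (hv : ∀ s : Finset ι, ∑ i ∈ s, v i ^ 2 ≤ C ^ 2) : ‖v‖ ≤ C :=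
  lp.norm_le_of_forall_sum_le (by norm_num) hC fun s => by simpa [Real.rpow_two] using hv s

end LpTwo

lemma memℓp_two_pow {s : ℝ} (hs : |s| < 1) : Memℓp (fun n : ℕ+ => s ^ (n : ℕ)) 2 := by
  refine memℓp_gen ?_
  have hs2 : s ^ 2 < 1 := by nlinarith [abs_nonneg s, sq_abs s]
  have hgeom := (summable_geometric_of_lt_one (sq_nonneg s) hs2).comp_injective
    PNat.coe_injective
  refine hgeom.congr fun n => ?_
  simp only [Function.comp_apply, norm_pow, Real.norm_eq_abs, ENNReal.toReal_ofNat, Real.rpow_two,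
    ← pow_mul, mul_comm 2]
  exact ((even_two.mul_left _).pow_abs s).symm

lemma PNat.sub_one_eq_iff {i j : ℕ+} (hi : 1 < i) : i - 1 = j ↔ i = j + 1 := by
  constructor
  · rintro rfl
    exact (PNat.sub_add_of_lt hi).symm
  · rintro rfl
    exact PNat.add_sub

lemma PNat.eq_sub_one_iff {i j : ℕ+} (hj : 1 < j) : i = j - 1 ↔ i + 1 = j := by
  rw [eq_comm, PNat.sub_one_eq_iff hj, eq_comm]

lemma PNat.add_one_ne_of_not_one_lt {j : ℕ+} (hj : ¬1 < j) (i : ℕ+) : i + 1 ≠ j :=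
  fun h => hj (h ▸ PNat.lt_add_left 1 i)

lemma two_div_add_sqrt_sq_add_one {t : ℝ} (ht : 2 ≤ t) :
    (2 / (t + √(t ^ 2 - 4))) ^ 2 + 1 = t * (2 / (t + √(t ^ 2 - 4))) := by
  have hr := Real.sq_sqrt (show 0 ≤ t ^ 2 - 4 by nlinarith)
  have hpos : 0 < t + √(t ^ 2 - 4) := by positivity
  field_simp
  linear_combination hr

lemma two_div_add_sqrt_lt_one {t : ℝ} (ht : 2 < t) : 2 / (t + √(t ^ 2 - 4)) < 1 := by
  rw [div_lt_one (by positivity)]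
  linarith [Real.sqrt_nonneg (t ^ 2 - 4)]

local notation "ℓ²" => lp (fun _ : ℕ+ => ℝ) 2

def IsHalfLineAdjacency (M : ℓ² →L[ℝ] ℓ²) : Prop :=
  ∀ (v : ℓ²) (j : ℕ+), M v j = (if 1 < j then v (j - 1) else 0) + v (j + 1)

namespace IsHalfLineAdjacency

variable {M : ℓ² →L[ℝ] ℓ²} (hM : IsHalfLineAdjacency M)
include hM

lemma norm_le_two : ‖M‖ ≤ 2 := by
  refine M.opNorm_le_bound zero_le_two fun v => lp.norm_le_of_forall_sum_sq_le (by positivity)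
    fun s => ?_
  have hshiftRight : ∑ i ∈ s, (if 1 < i then v (i - 1) else 0) ^ 2 ≤ ‖v‖ ^ 2 := by
    rw [← Finset.sum_preimage (· + 1) s (add_left_injective 1).injOn]
    · simpa [PNat.lt_add_left, PNat.add_sub] using lp.sum_sq_le_norm_sq v _
    · intro i _ hi
      rw [if_neg fun h => hi ⟨i - 1, PNat.sub_add_of_lt h⟩, zero_pow two_ne_zero]
  have hshiftLeft : ∑ i ∈ s, v (i + 1) ^ 2 ≤ ‖v‖ ^ 2 := by
    simpa using lp.sum_sq_le_norm_sq v (s.map (addRightEmbedding 1))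
  calc ∑ i ∈ s, M v i ^ 2
      ≤ ∑ i ∈ s, (2 * (if 1 < i then v (i - 1) else 0) ^ 2 + 2 * v (i + 1) ^ 2) := by
        gcongr with i
        rw [hM]
        nlinarith [sq_nonneg ((if 1 < i then v (i - 1) else 0) - v (i + 1))]
    _ ≤ (2 * ‖v‖) ^ 2 := by
        rw [Finset.sum_add_distrib, ← Finset.mul_sum, ← Finset.mul_sum]
        nlinarith

lemma apply_single (j : ℕ+) :
    M (lp.single 2 j 1) =
      lp.single 2 (j + 1) 1 + if 1 < j then lp.single 2 (j - 1) 1 else 0 := by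
  ext i
  rw [hM]
  split_ifs with hi hj hj
  all_goals simp [Pi.single_apply, PNat.sub_one_eq_iff, PNat.eq_sub_one_iff, hi, hj,
    PNat.add_one_ne_of_not_one_lt]

lemma isSelfAdjoint : IsSelfAdjoint M := by
  rw [ContinuousLinearMap.isSelfAdjoint_iff']
  ext v j
  calc (M.adjoint v) j = inner ℝ (lp.single 2 j (1 : ℝ)) (M.adjoint v) := by
        simp [lp.inner_single_left]
    _ = inner ℝ (M (lp.single 2 j 1)) v := M.adjoint_inner_right _ _
    _ = M v j := by
        rw [hM.apply_single, hM]
        split_ifs <;> simp [inner_add_left, lp.inner_single_left, add_comm]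

lemma smul_sub_apply_geometric {t s : ℝ} (hts : s ^ 2 + 1 = t * s) {g : ℓ²} (hg : ∀ n, g n = s ^ (n : ℕ)) :
    t • g - M g = lp.single 2 1 1 := by
  ext n
  rw [lp.coeFn_sub, Pi.sub_apply, hM, lp.coeFn_smul, Pi.smul_apply, smul_eq_mul]
  rcases (one_le : 1 ≤ n).eq_or_lt with rfl | hn
  · simp only [hg, PNat.val_ofNat, pow_one, lt_self_iff_false, ↓reduceIte, PNat.add_coe,
      Nat.reduceAdd, zero_add, lp.single_apply, Pi.single_eq_same]
    linear_combination -hts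
  · obtain ⟨m, rfl⟩ : ∃ m : ℕ+, n = m + 1 := ⟨n - 1, (PNat.sub_add_of_lt hn).symm⟩
    simp only [hg, PNat.add_coe, PNat.val_ofNat, pow_succ, Order.lt_add_one_iff, one_le,
      ↓reduceIte, PNat.add_sub, lp.single_apply, ne_eq, lt_self_iff_false, not_false_eq_true,
      PNat.add_one_ne_of_not_one_lt, Pi.single_eq_of_ne]
    linear_combination -(s ^ (m : ℕ)) * hts

end IsHalfLineAdjacency

theorem statement19
    (M : lp (fun _ : ℕ+ => ℝ) 2 →L[ℝ] lp (fun _ : ℕ+ => ℝ) 2)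
    (hM : ∀ (v : lp (fun _ : ℕ+ => ℝ) 2) (j : ℕ+),
      (M v) j = (if 1 < j then (v (j - 1)) else 0) + v (j + 1)) :
    ∀ t : ℝ, 2 < t →
      ∃ B : lp (fun _ : ℕ+ => ℝ) 2 →L[ℝ] lp (fun _ : ℕ+ => ℝ) 2,
        (1 - t⁻¹ • M) * B = 1 ∧ B * (1 - t⁻¹ • M) = 1 ∧
        HasSum (fun k : ℕ => (t⁻¹ • M) ^ k) B ∧
        ∀ j : ℕ+,
          (inner ℝ (lp.single 2 (1 : ℕ+) (1 : ℝ)) (B (lp.single 2 j (1 : ℝ))) : ℝ) =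
            t * (2 / (t + Real.sqrt (t ^ 2 - 4))) ^ (j : ℕ) := by
  intro t ht
  have hM' : IsHalfLineAdjacency M := hM
  set P := t⁻¹ • M
  have hP : ‖P‖ < 1 := by
    calc ‖P‖ = t⁻¹ * ‖M‖ := by rw [norm_smul, norm_inv, Real.norm_of_nonneg (by positivity)]
      _ ≤ t⁻¹ * 2 := by gcongr; exact hM'.norm_le_two
      _ < 1 := by rw [inv_mul_lt_one₀ (by positivity)]; exact ht
  refine ⟨∑' k, P ^ k, mul_neg_geom_series P hP, geom_series_mul_neg P hP,
    (summable_geometric_of_norm_lt_one hP).hasSum, fun j => ?_⟩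
  set s := 2 / (t + √(t ^ 2 - 4))
  have hs : |s| < 1 := by
    rw [abs_of_pos (by positivity)]; exact two_div_add_sqrt_lt_one ht
  obtain ⟨g, hg⟩ : ∃ g : ℓ², ∀ n, g n = s ^ (n : ℕ) := ⟨⟨_, memℓp_two_pow hs⟩, fun _ => rfl⟩
  have hres : (1 - P) (t • g) = lp.single 2 1 1 := by
    rw [← hM'.smul_sub_apply_geometric (two_div_add_sqrt_sq_add_one ht.le) hg]
    simp [P, smul_sub, smul_smul, (by positivity : t ≠ 0)]
  have hsymm : ((1 - P : ℓ² →L[ℝ] ℓ²) : ℓ² →ₗ[ℝ] ℓ²).IsSymmetric :=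
    ((IsSelfAdjoint.one _).sub ((IsSelfAdjoint.all t⁻¹).smul hM'.isSelfAdjoint)).isSymmetric
  calc inner ℝ (lp.single 2 1 1) ((∑' k, P ^ k) (lp.single 2 j 1))
      = inner ℝ (t • g) ((1 - P) ((∑' k, P ^ k) (lp.single 2 j 1))) := by
        rw [← hres]; exact hsymm _ _
    _ = inner ℝ (t • g) (lp.single 2 j 1) :=
        congrArg (inner ℝ (t • g)) (DFunLike.congr_fun (mul_neg_geom_series P hP) _)
    _ = t * s ^ (j : ℕ) := by simp [lp.inner_single_right, hg]

end ERpaper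
end
end
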